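/- arXiv:1908.03857 — 2 statements merged into one kernel-verified Lean document; each statement's English description precedes it below -/
import Mathlib

section
/- Let f : M₁ → M₂ and g : M₂ → M₁ be continuous maps of topological spaces, let h₁ : M₁ × [0,1] → M₁ be a homotopy from g∘f to the identity of M₁, let h₂ : M₂ × [0,1] → M₂ be a homotopy from f∘g to the identity of M₂, and let K : M₁ × [0,1] × [0,1] → M₂ be a homotopy, relative to M₁ × {0,1}, from (m,t) ↦ f(h₁(m,t)) to (m,t) ↦ h₂(f(m),t); that is, K(m,t,0) = f(h₁(m,t)), K(m,t,1) = h₂(f(m),t) for all (m,t), and K(m,0,u) and K(m,1,u) are independent of u. Then the formula G(m,γ,s) = (g(f(m)), g(γ(s)), f∘g∘γ, s) defines a continuous map G : Λ₁,₂ × [0,1] → W₁₁,₂ (well-defined since f(g(f(m))) = (f∘g∘γ)(0) and f(g(γ(s))) = (f∘g∘γ)(s)), and G is a two-sided homotopy inverse of f′₂: both f′₂∘G and G∘f′₂ are homotopic to the respective identity maps. -/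
/-!
Write a point of `W₁₁,₂` as `(m, m′, γ, s)`. Reparametrising `γ` so that it is constant near its
ends and on an interval around the marked time is homotopic to the identity of `W₁₁,₂`. After
this reparametrisation, `G ∘ f′₂` is joined to the identity by
`t ↦ (h₁(m,t), h₁(m′,t), γₜ, s′)`, where `γₜ` runs along `K(m,t,·)` on the two end collars, out
and back along `K(m′,t,·)` around the marked time, and along `h₂(γ(·),t)` elsewhere:
`K(·,·,1) = h₂(f ·, ·)` makes `γₜ` continuous, `K(·,·,0) = f ∘ h₁` puts its base and marked
points where `W₁₁,₂` requires them, and since `K` is constant in its last variable at `t = 0, 1`,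
`γ₀ = f ∘ g ∘ γ` and `γ₁ = γ`. The statement on `Λ₁,₂ × [0,1]` follows by marking time `0` and
forgetting the marked point again.
-/

open unitInterval

/-- The free loop space of `X`. -/
abbrev LoopSp (X : Type) [TopologicalSpace X] : Type :=
  {γ : C(unitInterval, X) // γ 0 = γ 1}

variable {M₁ M₂ : Type} [TopologicalSpace M₁] [TopologicalSpace M₂]

/-- `Λ₁,₂ = {(m,γ) ∈ M₁ × ΛM₂ : f(m) = γ(0)}`. -/
abbrev Lam12 (f : C(M₁, M₂)) : Type :=
  {p : M₁ × LoopSp M₂ // f p.1 = p.2.1 0}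

/-- `W₁₁,₂ = {(m,m′,γ,s) ∈ M₁ × M₁ × ΛM₂ × [0,1] : f(m) = γ(0), f(m′) = γ(s)}`. -/
abbrev W112 (f : C(M₁, M₂)) : Type :=
  {q : M₁ × M₁ × LoopSp M₂ × unitInterval // f q.1 = q.2.2.1.1 0 ∧ f q.2.1 = q.2.2.1.1 q.2.2.2}

/-- The map `f′₂ : W₁₁,₂ → Λ₁,₂ × [0,1]`, `(m,m′,γ,s) ↦ (m,γ,s)`. -/
def fPrime2 (f : C(M₁, M₂)) : C(W112 f, Lam12 f × unitInterval) where
  toFun q := (⟨(q.1.1, q.1.2.2.1), q.2.1⟩, q.1.2.2.2)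
  continuous_toFun := by
    apply Continuous.prodMk
    · exact Continuous.subtype_mk
        ((continuous_subtype_val.fst).prodMk continuous_subtype_val.snd.snd.fst) _
    · exact continuous_subtype_val.snd.snd.snd

/-- The loop `u ↦ f(g(γ(u)))`. -/
def fgLoop (f : C(M₁, M₂)) (g : C(M₂, M₁)) (γ : LoopSp M₂) : LoopSp M₂ :=
  ⟨f.comp (g.comp γ.1), by simp only [ContinuousMap.comp_apply, γ.2]⟩


open Set ContinuousMap

noncomputable section

theorem ContinuousMap.Homotopic.id_of_comp_homotopic {X : Type*} [TopologicalSpace X]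
    {F R : C(X, X)} (hR : (ContinuousMap.id X).Homotopic R) (hFR : (F.comp R).Homotopic R) :
    F.Homotopic (ContinuousMap.id X) := by
  simpa using ((Homotopic.refl F).comp hR).trans (hFR.trans hR.symm)

/-- `reparam 0 s` is the identity; `reparam 1 s` is `0` on `[0, 1/16]`, `1` on `[15/16, 1]` and
`s` on the interval of radius `1/16` around `reparamPt 1 s = s/2 + 3/16`. In general
`reparam τ s` fixes `0` and `1` and sends `reparamPt τ s` to `s`. -/
def reparam (τ s u : I) : I :=
  projIcc 0 1 zero_le_one (max (min ((1 + τ) * (u - τ / 8)) s) ((1 + τ) * (u - τ / 4)))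

def reparamPt (τ s : I) : I := projIcc 0 1 zero_le_one (s / (1 + τ) + 3 * τ / 16)

@[fun_prop]
theorem Continuous.reparam {X : Type} [TopologicalSpace X] {τ s u : X → I} (hτ : Continuous τ)
    (hs : Continuous s) (hu : Continuous u) : Continuous fun x => reparam (τ x) (s x) (u x) :=
  continuous_projIcc.comp (by fun_prop)

@[fun_prop]
theorem Continuous.reparamPt {X : Type} [TopologicalSpace X] {τ s : X → I} (hτ : Continuous τ)
    (hs : Continuous s) : Continuous fun x => reparamPt (τ x) (s x) :=
  continuous_projIcc.comp <| Continuous.add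
    ((Continuous.div (by fun_prop) (by fun_prop)) fun x => (add_pos_of_pos_of_nonneg one_pos
      (τ x).2.1).ne')
    (by fun_prop)

theorem reparam_zero (s u : I) : reparam 0 s u = u := by
  simp [reparam]

theorem reparam_apply_zero (τ s : I) : reparam τ s 0 = 0 := by
  have hτ : (0 : ℝ) ≤ τ := τ.2.1
  refine projIcc_eq_zero.2 (max_le ((min_le_left _ _).trans ?_) ?_) <;>
    simp only [Icc.coe_zero] <;> nlinarith

theorem reparam_apply_one (τ s : I) : reparam τ s 1 = 1 := by
  have hτ : (τ : ℝ) ≤ 1 := τ.2.2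
  refine projIcc_eq_one.2 (le_max_of_le_right ?_)
  simp only [Icc.coe_one]
  nlinarith [τ.2.1]

theorem coe_reparamPt (τ s : I) : (reparamPt τ s : ℝ) = s / (1 + τ) + 3 * τ / 16 := by
  have hτ0 : (0 : ℝ) ≤ τ := τ.2.1
  have hτ1 : (τ : ℝ) ≤ 1 := τ.2.2
  have hs0 : (0 : ℝ) ≤ s := s.2.1
  have hs1 : (s : ℝ) ≤ 1 := s.2.2
  have hd : (0 : ℝ) < 1 + τ := by linarith
  refine congrArg Subtype.val (projIcc_of_mem _ ⟨by positivity, ?_⟩)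
  rw [div_add' _ _ _ hd.ne', div_le_one hd]
  nlinarith

theorem reparamPt_zero (s : I) : reparamPt 0 s = s := by
  ext
  simp [coe_reparamPt]

theorem coe_reparamPt_one (s : I) : (reparamPt 1 s : ℝ) = s / 2 + 3 / 16 := by
  rw [coe_reparamPt]
  norm_num

theorem reparam_reparamPt (τ s : I) : reparam τ s (reparamPt τ s) = s := by
  have hτ0 : (0 : ℝ) ≤ τ := τ.2.1
  have hs0 : (0 : ℝ) ≤ s := s.2.1
  have hd : (0 : ℝ) < 1 + τ := by linarith
  have hscale : (1 + τ) * (reparamPt τ s : ℝ) = s + (1 + τ) * (3 * τ / 16) := by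
    rw [coe_reparamPt, mul_add, mul_div_cancel₀ _ hd.ne']
  have hlow : (s : ℝ) ≤ (1 + τ) * (reparamPt τ s - τ / 8) := by nlinarith
  have hhigh : (1 + τ) * ((reparamPt τ s : ℝ) - τ / 4) ≤ s := by nlinarith
  rw [reparam, min_eq_right hlow, max_eq_left hhigh, projIcc_val]

theorem reparam_one_of_le {s u : I} (hu : (u : ℝ) ≤ 1 / 16) : reparam 1 s u = 0 := by
  refine projIcc_eq_zero.2 (max_le ((min_le_left _ _).trans ?_) ?_) <;>
    simp only [Icc.coe_one] <;> linarith

theorem reparam_one_of_ge {s u : I} (hu : 15 / 16 ≤ (u : ℝ)) : reparam 1 s u = 1 := by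
  refine projIcc_eq_one.2 (le_max_of_le_right ?_)
  simp only [Icc.coe_one]
  linarith

theorem reparam_one_of_near {s u : I} (hu : |(u : ℝ) - reparamPt 1 s| ≤ 1 / 16) :
    reparam 1 s u = s := by
  rw [coe_reparamPt_one, abs_le] at hu
  have hlow : (s : ℝ) ≤ (1 + 1) * (u - 1 / 8) := by linarith
  have hhigh : (1 + 1) * ((u : ℝ) - 1 / 4) ≤ s := by linarith
  rw [reparam, Icc.coe_one, min_eq_right hlow, max_eq_left hhigh, projIcc_val]

theorem not_near_reparamPt_one {s u : I} (hu : min (u : ℝ) (1 - u) ≤ 1 / 16) :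
    ¬ |(u : ℝ) - reparamPt 1 s| ≤ 1 / 16 := by
  have hs0 : (0 : ℝ) ≤ s := s.2.1
  have hs1 : (s : ℝ) ≤ 1 := s.2.2
  rw [coe_reparamPt_one, abs_le, not_and_or, not_le, not_le]
  rcases min_le_iff.1 hu with hu | hu
  · left; linarith
  · right; linarith

def reparamMap : C(I × I, C(I, I)) :=
  ContinuousMap.curry ⟨fun p => reparam p.1.1 p.1.2 p.2, by fun_prop⟩

def LoopSp.reparam {X : Type} [TopologicalSpace X] (τ s : I) (γ : LoopSp X) : LoopSp X :=
  ⟨γ.1.comp (reparamMap (τ, s)), by simp [reparamMap, reparam_apply_zero, reparam_apply_one, γ.2]⟩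

@[fun_prop]
theorem Continuous.loopSp_reparam {X Y : Type} [TopologicalSpace X] [TopologicalSpace Y]
    {τ s : Y → I} {γ : Y → LoopSp X} (hτ : Continuous τ) (hs : Continuous s)
    (hγ : Continuous γ) : Continuous fun y => (γ y).reparam (τ y) (s y) :=
  (continuous_comp'.comp ((reparamMap.continuous.comp (hτ.prodMk hs)).prodMk
    (continuous_subtype_val.comp hγ))).subtype_mk _

variable {f : C(M₁, M₂)}

namespace W112

abbrev base (w : W112 f) : M₁ := w.1.1

abbrev mark (w : W112 f) : M₁ := w.1.2.1

abbrev loop (w : W112 f) : C(I, M₂) := w.1.2.2.1.1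

abbrev markTime (w : W112 f) : I := w.1.2.2.2

theorem map_base (w : W112 f) : f w.base = w.loop 0 := w.2.1

theorem map_mark (w : W112 f) : f w.mark = w.loop w.markTime := w.2.2

theorem loop_zero_eq_one (w : W112 f) : w.loop 0 = w.loop 1 := w.1.2.2.1.2

theorem ext {w w' : W112 f} (hbase : w.base = w'.base) (hmark : w.mark = w'.mark)
    (hloop : ∀ u, w.loop u = w'.loop u) (hmarkTime : w.markTime = w'.markTime) : w = w' :=
  Subtype.ext (Prod.ext hbase (Prod.ext hmark
    (Prod.ext (Subtype.ext (ContinuousMap.ext hloop)) hmarkTime)))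

def reparamFamily : C(I × W112 f, W112 f) where
  toFun p := ⟨(p.2.base, p.2.mark, p.2.1.2.2.1.reparam p.1 p.2.markTime,
      reparamPt p.1 p.2.markTime),
    (map_base p.2).trans (by simp [LoopSp.reparam, reparamMap, reparam_apply_zero]),
    (map_mark p.2).trans (by simp [LoopSp.reparam, reparamMap, reparam_reparamPt])⟩
  continuous_toFun := by
    refine Continuous.subtype_mk ?_ _
    fun_prop

def reparamHomotopy : Homotopy (ContinuousMap.id (W112 f)) (reparamFamily.curry 1) where
  toContinuousMap := reparamFamily
  map_zero_left w := ext rfl rfl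
    (fun u => congrArg w.loop (reparam_zero _ u))
    (reparamPt_zero _)
  map_one_left _ := rfl

theorem loop_reparam_one_of_collar (w : W112 f) {u : I} (hu : min (u : ℝ) (1 - u) ≤ 1 / 16) :
    w.loop (reparam 1 w.markTime u) = f w.base := by
  rw [w.map_base]
  rcases min_le_iff.1 hu with hu | hu
  · rw [reparam_one_of_le hu]
  · rw [reparam_one_of_ge (by linarith), w.loop_zero_eq_one]

def toLam12 : C(W112 f, Lam12 f) := ⟨fun w => ⟨(w.base, w.1.2.2.1), w.map_base⟩, by fun_prop⟩

end W112

def Lam12.toW112 : C(Lam12 f, W112 f) :=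
  ⟨fun p => ⟨(p.1.1, p.1.1, p.1.2, 0), p.2, p.2⟩, by fun_prop⟩

variable (f) in
def homotopyInverse (g : C(M₂, M₁)) : C(Lam12 f × I, W112 f) where
  toFun p := ⟨(g (f p.1.1.1), g (p.1.1.2.1 p.2), fgLoop f g p.1.1.2, p.2),
    congrArg (fun x => f (g x)) p.1.2, rfl⟩
  continuous_toFun := by
    have hfg : Continuous fun p : Lam12 f × I => fgLoop f g p.1.1.2 :=
      ((continuous_postcomp f).comp ((continuous_postcomp g).comp (by fun_prop))).subtype_mk _
    refine Continuous.subtype_mk ?_ _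
    fun_prop

variable (g : C(M₂, M₁)) (h₁ : C(M₁ × I, M₁)) (h₂ : C(M₂ × I, M₂))
  (K : C(M₁ × I × I, M₂))

-- The collars `min u (1 - u) ≤ 1/16` and the whisker around `reparamPt 1 s` join
-- `h₂(f ·, t) = K(·, t, 1)` to `f (h₁(·, t)) = K(·, t, 0)`, where the loop at time `t` of
-- `whiskerHomotopy` must be based and marked.
def whiskeredLoop (w : W112 f) (t u : I) : M₂ :=
  if min (u : ℝ) (1 - u) ≤ 1 / 16 then
    K (w.base, t, projIcc 0 1 zero_le_one (16 * min (u : ℝ) (1 - u)))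
  else if |(u : ℝ) - reparamPt 1 w.markTime| ≤ 1 / 16 then
    K (w.mark, t, projIcc 0 1 zero_le_one (16 * |(u : ℝ) - reparamPt 1 w.markTime|))
  else h₂ (w.loop (reparam 1 w.markTime u), t)

theorem continuous_whiskeredLoop (hK1 : ∀ m t, K (m, t, 1) = h₂ (f m, t)) :
    Continuous fun x : (W112 f × I) × I => whiskeredLoop h₂ K x.1.1 x.1.2 x.2 := by
  refine Continuous.if_le (by fun_prop) ?_ (by fun_prop) (by fun_prop) fun x hx => ?_
  · refine Continuous.if_le (by fun_prop) (by fun_prop) (by fun_prop) (by fun_prop)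
      fun x hx => ?_
    rw [hx, reparam_one_of_near hx.le, mul_one_div_cancel (by norm_num),
      projIcc_eq_one.2 le_rfl, hK1, x.1.1.map_mark]
  · rw [if_neg (not_near_reparamPt_one hx.le), hx, mul_one_div_cancel (by norm_num),
      projIcc_eq_one.2 le_rfl, hK1, x.1.1.loop_reparam_one_of_collar hx.le]

theorem whiskeredLoop_apply_zero (w : W112 f) (t : I) :
    whiskeredLoop h₂ K w t 0 = K (w.base, t, 0) := by
  simp [whiskeredLoop]

theorem whiskeredLoop_apply_one (w : W112 f) (t : I) :
    whiskeredLoop h₂ K w t 1 = K (w.base, t, 0) := by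
  simp [whiskeredLoop]

theorem whiskeredLoop_reparamPt (w : W112 f) (t : I) :
    whiskeredLoop h₂ K w t (reparamPt 1 w.markTime) = K (w.mark, t, 0) := by
  have hs0 : (0 : ℝ) ≤ w.markTime := w.markTime.2.1
  have hs1 : (w.markTime : ℝ) ≤ 1 := w.markTime.2.2
  have hcollar :
      ¬ min ((reparamPt 1 w.markTime : I) : ℝ) (1 - reparamPt 1 w.markTime) ≤ 1 / 16 := by
    rw [coe_reparamPt_one, not_le, lt_min_iff]
    constructor <;> linarith
  rw [whiskeredLoop, if_neg hcollar, if_pos (by simp), sub_self, abs_zero, mul_zero,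
    projIcc_eq_zero.2 le_rfl]

theorem whiskeredLoop_of_const {t : I} (hK : ∀ x v, K (x, t, v) = h₂ (f x, t)) (w : W112 f)
    (u : I) : whiskeredLoop h₂ K w t u = h₂ (w.loop (reparam 1 w.markTime u), t) := by
  unfold whiskeredLoop
  split_ifs with hcollar hnear
  · rw [hK, w.loop_reparam_one_of_collar hcollar]
  · rw [hK, reparam_one_of_near hnear, w.map_mark]
  · rfl

def whiskeredLoopFamily (hK1 : ∀ m t, K (m, t, 1) = h₂ (f m, t)) :
    C(W112 f × I, LoopSp M₂) :=
  let F : C(W112 f × I, C(I, M₂)) := ContinuousMap.curry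
    ⟨fun x => whiskeredLoop h₂ K x.1.1 x.1.2 x.2, continuous_whiskeredLoop h₂ K hK1⟩
  ⟨fun p => ⟨F p, (whiskeredLoop_apply_zero h₂ K _ _).trans
    (whiskeredLoop_apply_one h₂ K _ _).symm⟩, F.continuous.subtype_mk _⟩

def whiskerHomotopy
    (hh₁0 : ∀ m, h₁ (m, 0) = g (f m)) (hh₁1 : ∀ m, h₁ (m, 1) = m)
    (hh₂0 : ∀ m, h₂ (m, 0) = f (g m)) (hh₂1 : ∀ m, h₂ (m, 1) = m)
    (hK0 : ∀ m t, K (m, t, 0) = f (h₁ (m, t)))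
    (hK1 : ∀ m t, K (m, t, 1) = h₂ (f m, t))
    (hKrel0 : ∀ m u u', K (m, 0, u) = K (m, 0, u'))
    (hKrel1 : ∀ m u u', K (m, 1, u) = K (m, 1, u')) :
    Homotopy (((homotopyInverse f g).comp (fPrime2 f)).comp (W112.reparamFamily.curry 1))
      (W112.reparamFamily.curry 1) where
  toFun p := ⟨(h₁ (p.2.base, p.1), h₁ (p.2.mark, p.1), whiskeredLoopFamily h₂ K hK1 (p.2, p.1),
      reparamPt 1 p.2.markTime),
    (hK0 _ _).symm.trans (whiskeredLoop_apply_zero h₂ K _ _).symm,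
    (hK0 _ _).symm.trans (whiskeredLoop_reparamPt h₂ K _ _).symm⟩
  continuous_toFun := by
    refine Continuous.subtype_mk ?_ _
    fun_prop
  map_zero_left w := by
    have hconst : ∀ x v, K (x, 0, v) = h₂ (f x, 0) := fun x v => by rw [hKrel0 x v 1, hK1]
    refine W112.ext (hh₁0 _) ?_ (fun u => ?_) rfl
    · show h₁ (w.mark, 0) = g (w.loop (reparam 1 w.markTime (reparamPt 1 w.markTime)))
      rw [reparam_reparamPt, hh₁0, w.map_mark]
    · exact (whiskeredLoop_of_const h₂ K hconst w u).trans (hh₂0 _)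
  map_one_left w := by
    have hconst : ∀ x v, K (x, 1, v) = h₂ (f x, 1) := fun x v => by rw [hKrel1 x v 1, hK1]
    exact W112.ext (hh₁1 _) (hh₁1 _)
      (fun u => (whiskeredLoop_of_const h₂ K hconst w u).trans (hh₂1 _)) rfl

theorem homotopyInverse_comp_fPrime2_homotopic_id
    (hh₁0 : ∀ m, h₁ (m, 0) = g (f m)) (hh₁1 : ∀ m, h₁ (m, 1) = m)
    (hh₂0 : ∀ m, h₂ (m, 0) = f (g m)) (hh₂1 : ∀ m, h₂ (m, 1) = m)
    (hK0 : ∀ m t, K (m, t, 0) = f (h₁ (m, t)))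
    (hK1 : ∀ m t, K (m, t, 1) = h₂ (f m, t))
    (hKrel0 : ∀ m u u', K (m, 0, u) = K (m, 0, u'))
    (hKrel1 : ∀ m u u', K (m, 1, u) = K (m, 1, u')) :
    ((homotopyInverse f g).comp (fPrime2 f)).Homotopic (ContinuousMap.id _) :=
  Homotopic.id_of_comp_homotopic ⟨W112.reparamHomotopy⟩
    ⟨whiskerHomotopy g h₁ h₂ K hh₁0 hh₁1 hh₂0 hh₂1 hK0 hK1 hKrel0 hKrel1⟩

-- `f′₂ ∘ G` is, definitionally, `(toLam12 ∘ (G ∘ f′₂) ∘ toW112) × id`.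
variable {g} in
theorem fPrime2_comp_homotopyInverse_homotopic_id
    (h : ((homotopyInverse f g).comp (fPrime2 f)).Homotopic (ContinuousMap.id _)) :
    ((fPrime2 f).comp (homotopyInverse f g)).Homotopic (ContinuousMap.id _) :=
  (((Homotopic.refl W112.toLam12).comp h).comp (Homotopic.refl Lam12.toW112)).prodMap
    (Homotopic.refl (ContinuousMap.id I))

end

theorem explicit_homotopy_inverse_of_fPrime2
    (f : C(M₁, M₂)) (g : C(M₂, M₁))
    (h₁ : C(M₁ × unitInterval, M₁))
    (hh₁0 : ∀ m, h₁ (m, 0) = g (f m)) (hh₁1 : ∀ m, h₁ (m, 1) = m)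
    (h₂ : C(M₂ × unitInterval, M₂))
    (hh₂0 : ∀ m, h₂ (m, 0) = f (g m)) (hh₂1 : ∀ m, h₂ (m, 1) = m)
    (K : C(M₁ × unitInterval × unitInterval, M₂))
    (hK0 : ∀ m t, K (m, t, 0) = f (h₁ (m, t)))
    (hK1 : ∀ m t, K (m, t, 1) = h₂ (f m, t))
    (hKrel0 : ∀ m u u', K (m, 0, u) = K (m, 0, u'))
    (hKrel1 : ∀ m u u', K (m, 1, u) = K (m, 1, u')) :
    ∃ G : C(Lam12 f × unitInterval, W112 f),
      (∀ p : Lam12 f × unitInterval,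
        ((G p : W112 f) : M₁ × M₁ × LoopSp M₂ × unitInterval) =
          (g (f p.1.1.1), g (p.1.1.2.1 p.2), fgLoop f g p.1.1.2, p.2)) ∧
      ((fPrime2 f).comp G).Homotopic (ContinuousMap.id _) ∧
      (G.comp (fPrime2 f)).Homotopic (ContinuousMap.id _) := by
  have hW := homotopyInverse_comp_fPrime2_homotopic_id g h₁ h₂ K
    hh₁0 hh₁1 hh₂0 hh₂1 hK0 hK1 hKrel0 hKrel1
  exact ⟨homotopyInverse f g, fun _ => rfl, fPrime2_comp_homotopyInverse_homotopic_id hW, hW⟩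
end

section
/- Let M₁, M₂ be topological spaces, f : M₁ → M₂ and e : M₁ → Dᵏ continuous, where Dᵏ is the closed ball of radius ε in ℝᵏ with 0 < ε < 1/4. Let π : N → M₁ be a real topological vector bundle with zero section m ↦ 0ₘ, and let ν_e : N → M₂ × Dᵏ be a topological embedding (a continuous injection that is a homeomorphism onto its image) satisfying ν_e(0ₘ) = (f(m), e(m)) for all m ∈ M₁. Set X₂ = {(m,γ,s,x) ∈ Λ₁,₂ × [0,1] × Dᵏ : (γ(s),x) ∈ ν_e(N)} with the subspace topology. Then the map (f′₂,e) : W₁₁,₂ → X₂ given by (m,m′,γ,s) ↦ (m,γ,s,e(m′)) is well-defined (its image lies in X₂ since (γ(s),e(m′)) = (f(m′),e(m′)) = ν_e(0_{m′}), and it sends B₁₁,₂ into B̄₁,₂), and it is a homotopy equivalence of pairs (W₁₁,₂, B₁₁,₂) → (X₂, B̄₁,₂): there exists a map of pairs r : (X₂, B̄₁,₂) → (W₁₁,₂, B₁₁,₂) such that r∘(f′₂,e) and (f′₂,e)∘r are homotopic to the respective identities through homotopies preserving B₁₁,₂ (respectively B̄₁,₂) at every time. -/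
/-!
Statement 4: given a real topological vector bundle `N → M₁` and a topological
embedding `ν_e : N → M₂ × Dᵏ` with `ν_e(0ₘ) = (f(m), e(m))`, the map
`(f′₂,e) : W₁₁,₂ → X₂`, `(m,m′,γ,s) ↦ (m,γ,s,e(m′))`, is well defined and is a
homotopy equivalence of pairs `(W₁₁,₂, B₁₁,₂) → (X₂, B̄₁,₂)`.
-/

open unitInterval

/-- The constant loop at `x`. -/
def constLoop {X : Type} [TopologicalSpace X] (x : X) : LoopSp X :=
  ⟨ContinuousMap.const _ x, rfl⟩

variable {M₁ M₂ : Type} [TopologicalSpace M₁] [TopologicalSpace M₂]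

/-- `Dᵏ`: the closed ball of radius `ε` centered at `0` in `ℝᵏ`. -/
abbrev Dball (k : ℕ) (ε : ℝ) : Type :=
  (Metric.closedBall (0 : EuclideanSpace ℝ (Fin k)) ε : Set (EuclideanSpace ℝ (Fin k)))

/-- `B₁₁,₂ = {(m,m,γ,s) ∈ W₁₁,₂ : γ = [f(m)] or s ∈ {0,1}}`. -/
def B112 (f : C(M₁, M₂)) : Set (W112 f) :=
  {q | q.1.1 = q.1.2.1 ∧
    (q.1.2.2.1 = constLoop (f q.1.1) ∨ q.1.2.2.2 = 0 ∨ q.1.2.2.2 = 1)}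

/-- `B̄₁,₂ = {(m,γ,s,e(m)) ∈ Λ₁,₂ × [0,1] × Dᵏ : γ = [f(m)] or s ∈ {0,1}}`. -/
def Bbar12 (f : C(M₁, M₂)) {k : ℕ} {ε : ℝ} (e : C(M₁, Dball k ε)) :
    Set (Lam12 f × unitInterval × Dball k ε) :=
  {z | z.2.2 = e z.1.1.1 ∧
    (z.1.1.2 = constLoop (f z.1.1.1) ∨ z.2.1 = 0 ∨ z.2.1 = 1)}

/-- `v : C(Y,X)` is a homotopy inverse of `u : C(X,Y)` as maps of pairs
`(X,A) → (Y,B)`, through homotopies preserving `A` (resp. `B`) at all times. -/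
def IsPairHomotopyInverse {X Y : Type} [TopologicalSpace X] [TopologicalSpace Y]
    (A : Set X) (B : Set Y) (u : C(X, Y)) (v : C(Y, X)) : Prop :=
  Set.MapsTo u A B ∧ Set.MapsTo v B A ∧
  (∃ H : C(X × unitInterval, X),
    (∀ x, H (x, 0) = v (u x)) ∧ (∀ x, H (x, 1) = x) ∧ ∀ x ∈ A, ∀ t, H (x, t) ∈ A) ∧
  (∃ H : C(Y × unitInterval, Y),
    (∀ y, H (y, 0) = u (v y)) ∧ (∀ y, H (y, 1) = y) ∧ ∀ y ∈ B, ∀ t, H (y, t) ∈ B)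

/-- The space `X₂ = {(m,γ,s,x) ∈ Λ₁,₂ × [0,1] × Dᵏ : (γ(s),x) ∈ ν_e(N)}`. -/
abbrev X2space (f : C(M₁, M₂)) {k : ℕ} {ε : ℝ}
    (F : Type) [NormedAddCommGroup F] [NormedSpace ℝ F]
    (E : M₁ → Type) [∀ m, TopologicalSpace (E m)]
    [TopologicalSpace (Bundle.TotalSpace F E)]
    (νe : C(Bundle.TotalSpace F E, M₂ × Dball k ε)) : Type :=
  {z : Lam12 f × unitInterval × Dball k ε //
    (z.1.1.2.1 z.2.1, z.2.2) ∈ Set.range νe}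

/-!
A point `z = (m, γ, s, x)` of `X₂` determines a unique tube point `n` with
`νe n = (γ s, x)`. The deformation at time `t` shrinks `n` to `t • n` and inserts into `γ`, at a
marked time, a whisker running from `γ s` to `νe (t • n)` and back, the tip being the new
marked point. At `t = 0` the tip is `f (π n)`, which gives the homotopy inverse
`r z = (m, π n, γ₀, s₀)`; started at `(f′₂, e) q`, the same deformation contracts
`r ∘ (f′₂, e)` back to the identity of `W₁₁,₂`.

The marked time is pushed towards `1/2` by an amount that vanishes exactly when `x = e m`, and
the whisker gets width `(1 - t) · min(c, 1 - c) / 2` around the marked time `c`. So its width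
vanishes only when `t = 1` or when `n` lies on the zero section, where the whisker is constant;
in particular points of `B̄₁,₂` keep their marked time and stay in `B̄₁,₂`. Continuity at
parameters where a piece of the reparametrisation collapses comes from compactness of `I`: a
continuous family of paths that is constant at one parameter is uniformly almost constant nearby.
-/
open Set Topology Bundle

/-- The position of `u` in `[a, b]`, clamped to `I`; it is `0` when `a = b`. -/
noncomputable def ratioI (a b u : ℝ) : I := projIcc 0 1 zero_le_one ((u - a) / (b - a))

@[simp] lemma ratioI_left (a b : ℝ) : ratioI a b a = 0 := by simp [ratioI]

lemma ratioI_right {a b : ℝ} (h : a ≠ b) : ratioI a b b = 1 := by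
  simp [ratioI, div_self (sub_ne_zero.2 h.symm)]

@[simp] lemma ratioI_self (a u : ℝ) : ratioI a a u = 0 := by simp [ratioI]

lemma coe_ratioI {a b u : ℝ} (hau : a ≤ u) (hub : u ≤ b) :
    (ratioI a b u : ℝ) = (u - a) / (b - a) := by
  rcases eq_or_lt_of_le (hau.trans hub) with hab | hab
  · subst hab; simp [le_antisymm hau hub]
  · rw [ratioI, projIcc_of_mem]
    exact ⟨div_nonneg (by linarith) (by linarith), (div_le_one (by linarith)).2 (by linarith)⟩

lemma apply_ratioI_right {M : Type*} {g : I → M} {a b : ℝ}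
    (hconst : a = b → ∀ x, g x = g 0) : g (ratioI a b b) = g 1 := by
  by_cases h : a = b
  · subst h; rw [ratioI_self, hconst rfl 1]
  · rw [ratioI_right h]

section Reparametrization

variable {P M : Type*} [TopologicalSpace P] [TopologicalSpace M]

lemma continuousAt_ratioI {a b u : P → ℝ} (ha : Continuous a) (hb : Continuous b)
    (hu : Continuous u) {p : P} (hab : a p ≠ b p) :
    ContinuousAt (fun p => ratioI (a p) (b p) (u p)) p :=
  continuous_projIcc.continuousAt.comp
    ((hu.sub ha).continuousAt.div (hb.sub ha).continuousAt (sub_ne_zero.2 hab.symm))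

lemma continuousAt_apply_of_const {Y : Type*} [TopologicalSpace Y] [CompactSpace Y]
    {g : P → C(Y, M)} {p₀ : P} (hg : ContinuousAt g p₀) {y₀ : M}
    (hconst : ∀ y, g p₀ y = y₀) (v : P → Y) : ContinuousAt (fun p => g p (v p)) p₀ := by
  intro V hV
  rw [← hconst (v p₀)] at hconst
  obtain ⟨U, hUV, hU, hy₀⟩ := mem_nhds_iff.mp hV
  have hopen := ContinuousMap.isOpen_setOfPred_mapsTo (X := Y) isCompact_univ hU
  exact (hg.eventually_mem (hopen.mem_nhds fun y _ => by rw [hconst y]; exact hy₀)).mono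
    fun p hp => hUV (hp (mem_univ _))

/-- At parameters where `a p = b p` the ratio jumps, which is harmless because the path is
constant there. -/
lemma continuous_apply_ratioI {g : P → I → M} (hg : Continuous fun q : P × I => g q.1 q.2)
    {a b u : P → ℝ} (ha : Continuous a) (hb : Continuous b) (hu : Continuous u)
    (hconst : ∀ p, a p = b p → ∀ x, g p x = g p 0) :
    Continuous fun p => g p (ratioI (a p) (b p) (u p)) := by
  let G : C(P, C(I, M)) := ContinuousMap.curry ⟨_, hg⟩
  refine continuous_iff_continuousAt.2 fun p => ?_
  by_cases hab : a p = b p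
  · exact continuousAt_apply_of_const G.continuous.continuousAt (hconst p hab) _
  · exact continuous_eval.continuousAt.comp_of_eq
      (G.continuous.continuousAt.prodMk (continuousAt_ratioI ha hb hu hab)) rfl

end Reparametrization

section Whisker

variable {P M : Type*} [TopologicalSpace P] [TopologicalSpace M]

/-- `γ` with the whisker `ω` (a path from `γ s`) run out and back on `[c - w, c + w]`; note that
`σ (σ s * σ r) = s + (1 - s) r`, so the last branch runs through `γ|[s,1]`. -/
noncomputable def whiskerLoop (γ : I → M) (s : I) (ω : I → M) (c w : ℝ) (u : I) : M :=
  if (u : ℝ) ≤ c - w then γ (s * ratioI 0 (c - w) u)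
  else if (u : ℝ) ≤ c then ω (ratioI (c - w) c u)
  else if (u : ℝ) ≤ c + w then ω (σ (ratioI c (c + w) u))
  else γ (σ (σ s * σ (ratioI (c + w) 1 u)))

theorem continuous_whiskerLoop {γ ω : P → I → M} {s : P → I} {c w : P → ℝ}
    (hγ : Continuous fun q : P × I => γ q.1 q.2) (hω : Continuous fun q : P × I => ω q.1 q.2)
    (hs : Continuous s) (hc : Continuous c) (hw : Continuous w) (hw₀ : ∀ p, 0 ≤ w p)
    (hω₀ : ∀ p, ω p 0 = γ p (s p)) (hleft : ∀ p, c p - w p = 0 → s p = 0)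
    (hmid : ∀ p, w p = 0 → ∀ x, ω p x = ω p 0) (hright : ∀ p, c p + w p = 1 → s p = 1) :
    Continuous fun q : P × I => whiskerLoop (γ q.1) (s q.1) (ω q.1) (c q.1) (w q.1) q.2 := by
  have hu : Continuous fun q : P × I => (q.2 : ℝ) := by fun_prop
  unfold whiskerLoop
  refine Continuous.if_le ?_ (Continuous.if_le ?_ (Continuous.if_le ?_ ?_ hu (by fun_prop) ?_)
    hu (by fun_prop) ?_) hu (by fun_prop) ?_
  · exact continuous_apply_ratioI (g := fun (q : P × I) x => γ q.1 (s q.1 * x)) (by fun_prop)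
      (a := fun _ => 0) (b := fun q => c q.1 - w q.1) (by fun_prop) (by fun_prop) hu
      fun q h x => by simp [hleft q.1 h.symm]
  · exact continuous_apply_ratioI (g := fun (q : P × I) => ω q.1) (by fun_prop)
      (a := fun q => c q.1 - w q.1) (b := fun q => c q.1) (by fun_prop) (by fun_prop) hu
      fun q h x => hmid q.1 (by linarith) x
  · exact continuous_apply_ratioI (g := fun (q : P × I) x => ω q.1 (σ x)) (by fun_prop)
      (a := fun q => c q.1) (b := fun q => c q.1 + w q.1) (by fun_prop) (by fun_prop) hu
      fun q h x => by rw [hmid q.1 (by linarith), hmid q.1 (by linarith) (σ 0)]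
  · exact continuous_apply_ratioI (g := fun (q : P × I) x => γ q.1 (σ (σ (s q.1) * σ x)))
      (by fun_prop) (a := fun q => c q.1 + w q.1) (b := fun _ => 1) (by fun_prop) (by fun_prop)
      hu fun q h x => by simp [hright q.1 h]
  · rintro ⟨p, u⟩ (hu : (u : ℝ) = c p + w p)
    simp only [hu, ratioI_left, symm_zero, mul_one, symm_symm]
    rw [apply_ratioI_right (g := fun x => ω p (σ x)) fun h x => by
      rw [hmid p (by linarith) (σ x), hmid p (by linarith) (σ 0)]]
    simp [hω₀]
  · rintro ⟨p, u⟩ (hu : (u : ℝ) = c p)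
    simp only [hu, le_add_iff_nonneg_right, hw₀, if_true, ratioI_left, symm_zero]
    exact apply_ratioI_right fun h x => hmid p (by linarith) x
  · rintro ⟨p, u⟩ (hu : (u : ℝ) = c p - w p)
    simp only [hu, sub_le_self_iff, hw₀, if_true, ratioI_left, hω₀]
    rw [apply_ratioI_right (g := fun x => γ p (s p * x)) fun h x => by simp [hleft p h.symm],
      mul_one]

end Whisker

section WhiskerValues

variable {M : Type*} {γ ω : I → M} {s : I} {c w : ℝ}

lemma whiskerLoop_zero (h : 0 ≤ c - w) : whiskerLoop γ s ω c w 0 = γ 0 := by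
  simp [whiskerLoop, h]

lemma whiskerLoop_one (hw : 0 ≤ w) (hcw : c + w ≤ 1) (hω₀ : ω 0 = γ s)
    (hright : c + w = 1 → s = 1) : whiskerLoop γ s ω c w 1 = γ 1 := by
  unfold whiskerLoop
  simp only [Icc.coe_one]
  split_ifs
  · rw [show c - w = 1 by linarith, ratioI_right one_ne_zero.symm, hright (by linarith), one_mul]
  · linarith
  · have hc : c ≠ 1 := by linarith
    rw [show c + w = 1 by linarith, ratioI_right hc, symm_one, hω₀, hright (by linarith)]
  · rw [ratioI_right (by linarith), symm_one, mul_zero, symm_zero]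

lemma whiskerLoop_apply_of_coe_eq {u : I} (hu : (u : ℝ) = c) (hw : 0 ≤ w) (hω₀ : ω 0 = γ s)
    (hleft : c - w = 0 → s = 0) (hmid : w = 0 → ∀ x, ω x = ω 0) :
    whiskerLoop γ s ω c w u = ω 1 := by
  unfold whiskerLoop
  rw [hu]
  rcases eq_or_lt_of_le hw with hw | hw
  · subst hw
    rw [if_pos (by simp), hmid rfl 1, hω₀, sub_zero]
    by_cases hc : c = 0
    · simp [hc, hleft (by simp [hc])]
    · rw [ratioI_right (Ne.symm hc), mul_one]
  · rw [if_neg (by linarith), if_pos le_rfl, ratioI_right (by linarith)]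

lemma whiskerLoop_self : whiskerLoop γ s ω s 0 = γ := by
  funext u
  unfold whiskerLoop
  simp only [sub_zero, add_zero]
  by_cases hu : (u : ℝ) ≤ s
  · rw [if_pos hu]
    congr 1
    rcases eq_or_lt_of_le (unitInterval.nonneg s) with hs | hs
    · exact Subtype.ext (by simp [le_antisymm (hs ▸ hu) u.2.1])
    · exact Subtype.ext (by rw [Set.Icc.coe_mul, coe_ratioI u.2.1 hu]; field_simp; ring)
  · push Not at hu
    rw [if_neg hu.not_ge, if_neg hu.not_ge, if_neg hu.not_ge]
    congr 1
    have hs1 : (1 : ℝ) - s ≠ 0 := by linarith [u.2.2]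
    refine Subtype.ext ?_
    rw [coe_symm_eq, Set.Icc.coe_mul, coe_symm_eq, coe_symm_eq, coe_ratioI hu.le u.2.2]
    field_simp
    ring

lemma whiskerLoop_eq_of_forall_eq {y : M} (hγ : ∀ x, γ x = y) (hω : ∀ x, ω x = y) (u : I) :
    whiskerLoop γ s ω c w u = y := by
  unfold whiskerLoop
  split_ifs <;> simp [hγ, hω]

end WhiskerValues

noncomputable def towardsHalf (s μ : I) : I :=
  ⟨(1 - μ) * s + μ / 2, by nlinarith [s.2.1, s.2.2, μ.2.1, μ.2.2],
    by nlinarith [s.2.1, s.2.2, μ.2.1, μ.2.2]⟩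

@[simp] lemma towardsHalf_zero (s : I) : towardsHalf s 0 = s := by
  ext; simp [towardsHalf]

lemma continuous_towardsHalf : Continuous fun p : I × I => towardsHalf p.1 p.2 := by
  unfold towardsHalf; fun_prop

lemma towardsHalf_eq_zero {s μ : I} (h : (towardsHalf s μ : ℝ) = 0) : μ = 0 ∧ s = 0 := by
  simp only [towardsHalf] at h
  have hμ : (μ : ℝ) = 0 := by nlinarith [s.2.1, s.2.2, μ.2.1, μ.2.2]
  refine ⟨Subtype.ext hμ, Subtype.ext ?_⟩
  simpa [hμ] using h

lemma towardsHalf_eq_one {s μ : I} (h : (towardsHalf s μ : ℝ) = 1) : μ = 0 ∧ s = 1 := by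
  simp only [towardsHalf] at h
  have hμ : (μ : ℝ) = 0 := by nlinarith [s.2.1, s.2.2, μ.2.1, μ.2.2]
  refine ⟨Subtype.ext hμ, Subtype.ext ?_⟩
  simpa [hμ] using h

noncomputable def halfWidth (t c : I) : ℝ := (1 - t) * min (c : ℝ) (1 - c) / 2

lemma continuous_halfWidth : Continuous fun p : I × I => halfWidth p.1 p.2 := by
  unfold halfWidth; fun_prop

@[simp] lemma halfWidth_one (c : I) : halfWidth 1 c = 0 := by simp [halfWidth]

section halfWidth

variable (t c : I)

lemma halfWidth_nonneg : 0 ≤ halfWidth t c := by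
  unfold halfWidth
  have := le_min c.2.1 (sub_nonneg.2 c.2.2)
  have := t.2.2
  positivity

lemma halfWidth_le_min : halfWidth t c ≤ min (c : ℝ) (1 - c) / 2 := by
  unfold halfWidth
  have := le_min c.2.1 (sub_nonneg.2 c.2.2)
  nlinarith [t.2.1]

lemma sub_halfWidth_nonneg : 0 ≤ (c : ℝ) - halfWidth t c := by
  linarith [halfWidth_le_min t c, min_le_left (c : ℝ) (1 - c), c.2.1]

lemma add_halfWidth_le_one : (c : ℝ) + halfWidth t c ≤ 1 := by
  linarith [halfWidth_le_min t c, min_le_right (c : ℝ) (1 - c), c.2.2]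

variable {t c}

lemma eq_zero_of_sub_halfWidth_eq_zero (h : (c : ℝ) - halfWidth t c = 0) : (c : ℝ) = 0 := by
  linarith [halfWidth_le_min t c, min_le_left (c : ℝ) (1 - c), c.2.1]

lemma eq_one_of_add_halfWidth_eq_one (h : (c : ℝ) + halfWidth t c = 1) : (c : ℝ) = 1 := by
  linarith [halfWidth_le_min t c, min_le_right (c : ℝ) (1 - c), c.2.2]

lemma halfWidth_eq_zero (h : halfWidth t c = 0) : t = 1 ∨ (c : ℝ) = 0 ∨ (c : ℝ) = 1 := by
  unfold halfWidth at h
  rcases mul_eq_zero.1 (div_eq_zero_iff.1 h |>.resolve_right two_ne_zero) with h | h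
  · exact Or.inl (Subtype.ext (by rw [Icc.coe_one]; linarith))
  · rcases min_choice (c : ℝ) (1 - c) with h' | h' <;> rw [h'] at h
    · exact Or.inr (Or.inl h)
    · exact Or.inr (Or.inr (by linarith))

end halfWidth

section FiberSmul

variable {B F : Type*} {E : B → Type*} [∀ b, AddCommGroup (E b)] [∀ b, Module ℝ (E b)]

def fiberSmul (c : ℝ) (v : TotalSpace F E) : TotalSpace F E := ⟨v.proj, c • v.2⟩

@[simp] lemma fiberSmul_one (v : TotalSpace F E) : fiberSmul 1 v = v := by simp [fiberSmul]

@[simp] lemma fiberSmul_zero (v : TotalSpace F E) : fiberSmul 0 v = ⟨v.proj, 0⟩ := by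
  simp [fiberSmul]

@[simp] lemma fiberSmul_zero_right (c : ℝ) (b : B) :
    fiberSmul c (⟨b, 0⟩ : TotalSpace F E) = ⟨b, 0⟩ := by
  simp [fiberSmul]

/-- In a trivialization the fibrewise scalar multiplication is `(b, v) ↦ (b, c • v)`. -/
lemma continuous_fiberSmul [TopologicalSpace B] [NormedAddCommGroup F] [NormedSpace ℝ F]
    [∀ b, TopologicalSpace (E b)] [TopologicalSpace (TotalSpace F E)] [FiberBundle F E]
    [VectorBundle ℝ F E] :
    Continuous fun p : ℝ × TotalSpace F E => fiberSmul p.1 p.2 := by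
  refine continuous_iff_continuousAt.2 fun ⟨c₀, v₀⟩ => ?_
  let e := trivializationAt F E v₀.proj
  have hsource : IsOpen ((univ : Set ℝ) ×ˢ e.source) := isOpen_univ.prod e.open_source
  have hlocal : ContinuousOn (fun p : ℝ × TotalSpace F E =>
      (⟨p.2.proj, e.symm p.2.proj (p.1 • (e p.2).2)⟩ : TotalSpace F E))
      (univ ×ˢ e.source) := by
    refine e.continuousOn_symm.comp (((FiberBundle.continuous_proj F E).comp_continuousOn
      continuousOn_snd).prodMk (continuousOn_fst.smul (continuous_snd.comp_continuousOn
      (e.continuousOn.comp continuousOn_snd fun p hp => hp.2)))) fun p hp => ?_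
    exact ⟨e.mem_source.1 hp.2, trivial⟩
  refine (hlocal.congr fun ⟨c, v⟩ ⟨_, hv⟩ => ?_).continuousAt
    (hsource.mem_nhds ⟨trivial, FiberBundle.mem_trivializationAt_proj_source⟩)
  have hb : v.proj ∈ e.baseSet := e.mem_source.1 hv
  simp only [fiberSmul, ← e.coe_symmₗ (R := ℝ) hb, map_smul, e.coe_symmₗ hb,
    e.symm_proj_apply v hb]

end FiberSmul
namespace X2space

variable {f : C(M₁, M₂)} {k : ℕ} {ε : ℝ}
  {F : Type} [NormedAddCommGroup F] [NormedSpace ℝ F]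
  {E : M₁ → Type} [∀ m, TopologicalSpace (E m)] [TopologicalSpace (TotalSpace F E)]
  {νe : C(TotalSpace F E, M₂ × Dball k ε)} (e : C(M₁, Dball k ε))

section Coordinates

def base (z : X2space f F E νe) : M₁ := z.1.1.1.1

def loop (z : X2space f F E νe) : LoopSp M₂ := z.1.1.1.2

def time (z : X2space f F E νe) : I := z.1.2.1

def disc (z : X2space f F E νe) : Dball k ε := z.1.2.2

def mk (m : M₁) (γ : LoopSp M₂) (hm : f m = γ.1 0) (s : I) (x : Dball k ε)
    (hx : (γ.1 s, x) ∈ range νe) : X2space f F E νe :=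
  ⟨(⟨(m, γ), hm⟩, s, x), hx⟩

lemma continuous_mk {P : Type*} [TopologicalSpace P] {m : P → M₁} {γ : P → LoopSp M₂}
    {s : P → I} {x : P → Dball k ε} (hm : Continuous m) (hγ : Continuous γ)
    (hs : Continuous s) (hx : Continuous x) (hmγ : ∀ p, f (m p) = (γ p).1 0)
    (hγx : ∀ p, ((γ p).1 (s p), x p) ∈ range νe) :
    Continuous fun p => mk (m p) (γ p) (hmγ p) (s p) (x p) (hγx p) :=
  ((hm.prodMk hγ).subtype_mk _ |>.prodMk (hs.prodMk hx)).subtype_mk _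

lemma ext {z z' : X2space f F E νe} (hm : z.base = z'.base) (hγ : z.loop = z'.loop)
    (hs : z.time = z'.time) (hx : z.disc = z'.disc) : z = z' :=
  Subtype.ext (Prod.ext (Subtype.ext (Prod.ext hm hγ)) (Prod.ext hs hx))

variable (z : X2space f F E νe)

lemma f_base : f z.base = z.loop.1 0 := z.1.1.2

lemma mem_range : (z.loop.1 z.time, z.disc) ∈ range νe := z.2

lemma loop_apply_time (hs : z.time = 0 ∨ z.time = 1) : z.loop.1 z.time = f z.base := by
  rw [f_base]
  rcases hs with hs | hs <;> rw [hs]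
  exact z.loop.2.symm

lemma continuous_base : Continuous (base (f := f) (F := F) (E := E) (νe := νe)) := by
  unfold base; fun_prop

lemma continuous_loop : Continuous (loop (f := f) (F := F) (E := E) (νe := νe)) := by
  unfold loop; fun_prop

lemma continuous_time : Continuous (time (f := f) (F := F) (E := E) (νe := νe)) := by
  unfold time; fun_prop

lemma continuous_disc : Continuous (disc (f := f) (F := F) (E := E) (νe := νe)) := by
  unfold disc; fun_prop

def toW112 (m' : M₁) (h : f m' = z.loop.1 z.time) : W112 f :=
  ⟨(z.base, m', z.loop, z.time), z.f_base, h⟩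

lemma toW112_congr {m' m'' : M₁} (hm : m' = m'') (h : f m' = z.loop.1 z.time)
    (h' : f m'' = z.loop.1 z.time) : z.toW112 m' h = z.toW112 m'' h' := by
  subst hm; rfl

lemma continuous_toW112 {P : Type*} [TopologicalSpace P] {z : P → X2space f F E νe}
    {m' : P → M₁} (hz : Continuous z) (hm' : Continuous m')
    (h : ∀ p, f (m' p) = (z p).loop.1 (z p).time) :
    Continuous fun p => (z p).toW112 (m' p) (h p) :=
  ((continuous_base.comp hz).prodMk (hm'.prodMk ((continuous_loop.comp hz).prodMk
    (continuous_time.comp hz)))).subtype_mk _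

variable (t : I)

noncomputable def offset : I := projIcc 0 1 zero_le_one (dist z.disc (e z.base))

noncomputable def mark : I := towardsHalf z.time (σ t * z.offset e)

noncomputable def width : ℝ := halfWidth t (z.mark e t)

lemma continuous_offset : Continuous fun z : X2space f F E νe => z.offset e :=
  continuous_projIcc.comp (continuous_disc.dist (e.continuous.comp continuous_base))

lemma continuous_mark : Continuous fun p : X2space f F E νe × I => p.1.mark e p.2 :=
  continuous_towardsHalf.comp ((continuous_time.comp continuous_fst).prodMk
    ((continuous_symm.comp continuous_snd).mul ((continuous_offset e).comp continuous_fst)))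

lemma continuous_width : Continuous fun p : X2space f F E νe × I => p.1.width e p.2 :=
  continuous_halfWidth.comp (continuous_snd.prodMk (continuous_mark e))

variable {e z}

lemma loop_apply_time_of_mem_Bbar12 (hz : (z : Lam12 f × I × Dball k ε) ∈ Bbar12 f e) :
    z.loop.1 z.time = f z.base := by
  rcases hz.2 with hγ | hs
  · rw [show z.loop = _ from hγ]; rfl
  · exact z.loop_apply_time hs

lemma toW112_mem_B112 (hz : (z : Lam12 f × I × Dball k ε) ∈ Bbar12 f e) {m' : M₁}
    (hm : m' = z.base) (h : f m' = z.loop.1 z.time) : z.toW112 m' h ∈ B112 f :=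
  ⟨hm.symm, hz.2⟩

lemma offset_eq_zero_iff : z.offset e = 0 ↔ z.disc = e z.base := by
  simp [offset]

lemma mark_of_disc_eq (h : z.disc = e z.base) : z.mark e t = z.time := by
  simp [mark, offset_eq_zero_iff.2 h]

variable (e z)

@[simp] lemma mark_one : z.mark e 1 = z.time := by simp [mark]

@[simp] lemma width_one : z.width e 1 = 0 := by simp [width]

lemma width_nonneg : 0 ≤ z.width e t := halfWidth_nonneg _ _

lemma mark_sub_width_nonneg : 0 ≤ (z.mark e t : ℝ) - z.width e t := sub_halfWidth_nonneg _ _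

lemma mark_add_width_le_one : (z.mark e t : ℝ) + z.width e t ≤ 1 := add_halfWidth_le_one _ _

lemma time_eq_zero_of_mark_sub_width (h : (z.mark e t : ℝ) - z.width e t = 0) : z.time = 0 :=
  (towardsHalf_eq_zero (eq_zero_of_sub_halfWidth_eq_zero h)).2

lemma time_eq_one_of_mark_add_width (h : (z.mark e t : ℝ) + z.width e t = 1) : z.time = 1 :=
  (towardsHalf_eq_one (eq_one_of_add_halfWidth_eq_one h)).2

end Coordinates

section Tube

variable (hνe : IsEmbedding νe)

noncomputable def tubePoint (z : X2space f F E νe) : TotalSpace F E :=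
  hνe.toHomeomorph.symm ⟨_, z.mem_range⟩

lemma apply_tubePoint (z : X2space f F E νe) :
    νe (z.tubePoint hνe) = (z.loop.1 z.time, z.disc) :=
  congrArg Subtype.val (hνe.toHomeomorph.apply_symm_apply ⟨_, z.mem_range⟩)

lemma continuous_tubePoint : Continuous (tubePoint (f := f) hνe) :=
  hνe.toHomeomorph.symm.continuous.comp (((continuous_eval.comp
    (continuous_subtype_val.comp continuous_loop |>.prodMk continuous_time)).prodMk
    continuous_disc).subtype_mk _)

variable [∀ m, AddCommGroup (E m)] {e}
  (hzero : ∀ m : M₁, νe ⟨m, 0⟩ = (f m, e m))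

include hzero in
lemma tubePoint_eq_zero {z : X2space f F E νe} {m : M₁} (hγ : z.loop.1 z.time = f m)
    (hx : z.disc = e m) : z.tubePoint hνe = ⟨m, 0⟩ :=
  hνe.injective (by rw [apply_tubePoint, hzero, hγ, hx])

include hzero in
lemma tubePoint_of_mem_Bbar12 {z : X2space f F E νe}
    (hz : (z : Lam12 f × I × Dball k ε) ∈ Bbar12 f e) : z.tubePoint hνe = ⟨z.base, 0⟩ :=
  tubePoint_eq_zero hνe hzero (z.loop_apply_time_of_mem_Bbar12 hz) hz.1

include hzero in
lemma eq_one_or_tubePoint_eq_zero {z : X2space f F E νe} {t : I}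
    (hc : (z.mark e t : ℝ) = 0 ∨ (z.mark e t : ℝ) = 1) :
    t = 1 ∨ z.tubePoint hνe = ⟨z.base, 0⟩ := by
  obtain ⟨hμ, hs⟩ : σ t * z.offset e = 0 ∧ (z.time = 0 ∨ z.time = 1) := by
    rcases hc with hc | hc
    · exact (towardsHalf_eq_zero hc).imp_right Or.inl
    · exact (towardsHalf_eq_one hc).imp_right Or.inr
  rcases mul_eq_zero.1 (congrArg Subtype.val hμ) with ht | ho
  · exact Or.inl (Subtype.ext (by rw [coe_symm_eq] at ht; rw [Icc.coe_one]; linarith))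
  · exact Or.inr (tubePoint_eq_zero hνe hzero (z.loop_apply_time hs)
      (offset_eq_zero_iff.1 (Subtype.ext ho)))

/-- The map `(f′₂, e)`. -/
def ofW112 : C(W112 f, X2space f F E νe) where
  toFun q := mk q.1.1 q.1.2.2.1 q.2.1 q.1.2.2.2 (e q.1.2.1)
    ⟨⟨q.1.2.1, 0⟩, by rw [hzero, q.2.2]⟩
  continuous_toFun := continuous_mk (by fun_prop) (by fun_prop) (by fun_prop)
    (by fun_prop) _ _

lemma tubePoint_ofW112 (q : W112 f) : (ofW112 hzero q).tubePoint hνe = ⟨q.1.2.1, 0⟩ :=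
  tubePoint_eq_zero hνe hzero q.2.2.symm rfl

lemma ofW112_toW112 {z : X2space f F E νe} {m' : M₁} (h : f m' = z.loop.1 z.time)
    (hx : z.disc = e m') : ofW112 hzero (z.toW112 m' h) = z :=
  ext rfl rfl rfl hx.symm

lemma toW112_of_ofW112_eq {q : W112 f} {z : X2space f F E νe} (hz : ofW112 hzero q = z)
    (h : f q.1.2.1 = z.loop.1 z.time) : z.toW112 q.1.2.1 h = q := by
  subst hz; rfl

lemma ofW112_mem_Bbar12 {q : W112 f} (hq : q ∈ B112 f) :
    (ofW112 hzero q : Lam12 f × I × Dball k ε) ∈ Bbar12 f e :=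
  ⟨congrArg e hq.1.symm, hq.2⟩

variable [∀ m, Module ℝ (E m)]

noncomputable def tubeImage (z : X2space f F E νe) (c : I) : M₂ × Dball k ε :=
  νe (fiberSmul c (z.tubePoint hνe))

noncomputable def tubePath (z : X2space f F E νe) (c : I) : M₂ := (z.tubeImage hνe c).1

@[simp] lemma tubeImage_one (z : X2space f F E νe) :
    z.tubeImage hνe 1 = (z.loop.1 z.time, z.disc) := by
  simp [tubeImage, apply_tubePoint]

include hzero in
lemma tubeImage_zero (z : X2space f F E νe) :
    z.tubeImage hνe 0 = (f (z.tubePoint hνe).proj, e (z.tubePoint hνe).proj) := by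
  simp [tubeImage, hzero]

include hzero in
lemma tubeImage_of_tubePoint_eq {z : X2space f F E νe} {m : M₁}
    (h : z.tubePoint hνe = ⟨m, 0⟩) (c : I) : z.tubeImage hνe c = (f m, e m) := by
  simp [tubeImage, h, hzero]

@[simp] lemma tubePath_one (z : X2space f F E νe) : z.tubePath hνe 1 = z.loop.1 z.time := by
  simp [tubePath]

include hzero in
lemma tubePath_zero (z : X2space f F E νe) : z.tubePath hνe 0 = f (z.tubePoint hνe).proj := by
  simp [tubePath, tubeImage_zero hνe hzero]

include hzero in
lemma tubePath_of_tubePoint_eq {z : X2space f F E νe} {m : M₁}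
    (h : z.tubePoint hνe = ⟨m, 0⟩) (c : I) : z.tubePath hνe c = f m := by
  simp [tubePath, tubeImage_of_tubePoint_eq hνe hzero h]

variable (e) (z : X2space f F E νe) (t : I)

noncomputable def whisker (x : I) : M₂ := z.tubePath hνe (σ (σ t * x))

noncomputable def deformLoop : I → M₂ :=
  whiskerLoop z.loop.1 z.time (z.whisker hνe t) (z.mark e t) (z.width e t)

@[simp] lemma whisker_zero : z.whisker hνe t 0 = z.loop.1 z.time := by simp [whisker]

@[simp] lemma whisker_one : z.whisker hνe t 1 = z.tubePath hνe t := by simp [whisker]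

variable {e}

include hzero in
/-- Either `t = 1`, or the marked point is an endpoint of `I`, which forces `x = e m` and
`γ s = f m`, i.e. puts the tube point on the zero section. -/
lemma whisker_eq_of_width_eq_zero (h : z.width e t = 0) (x : I) :
    z.whisker hνe t x = z.whisker hνe t 0 := by
  rcases halfWidth_eq_zero h with rfl | hc
  · simp [whisker]
  · rcases eq_one_or_tubePoint_eq_zero hνe hzero hc with rfl | hn
    · simp [whisker]
    · simp [whisker, tubePath_of_tubePoint_eq hνe hzero hn]

variable (e)

lemma deformLoop_one : z.deformLoop e hνe 1 = z.loop.1 := by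
  simp [deformLoop, whiskerLoop_self]

lemma deformLoop_apply_zero : z.deformLoop e hνe t 0 = f z.base := by
  rw [deformLoop, whiskerLoop_zero (z.mark_sub_width_nonneg e t), f_base]

lemma deformLoop_apply_one : z.deformLoop e hνe t 1 = f z.base := by
  rw [deformLoop, whiskerLoop_one (z.width_nonneg e t) (z.mark_add_width_le_one e t)
    (z.whisker_zero hνe t) (z.time_eq_one_of_mark_add_width e t), f_base, z.loop.2]

variable {e}

include hzero in
lemma deformLoop_apply_mark : z.deformLoop e hνe t (z.mark e t) = z.tubePath hνe t := by
  rw [deformLoop, whiskerLoop_apply_of_coe_eq rfl (z.width_nonneg e t) (z.whisker_zero hνe t)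
    (z.time_eq_zero_of_mark_sub_width e t) (z.whisker_eq_of_width_eq_zero hνe hzero t),
    whisker_one]

include hzero in
lemma deformLoop_of_loop_eq_const (hγ : z.loop = constLoop (f z.base)) (hx : z.disc = e z.base)
    (u : I) : z.deformLoop e hνe t u = f z.base := by
  have hγ' (v : I) : z.loop.1 v = f z.base := by rw [hγ]; rfl
  have hn := tubePoint_eq_zero hνe hzero (hγ' _) hx
  exact whiskerLoop_eq_of_forall_eq hγ' (fun x => tubePath_of_tubePoint_eq hνe hzero hn _) u

section Bundle

variable [FiberBundle F E] [VectorBundle ℝ F E]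

lemma continuous_tubeImage : Continuous fun p : X2space f F E νe × I => p.1.tubeImage hνe p.2 :=
  νe.continuous.comp (continuous_fiberSmul.comp
    ((continuous_subtype_val.comp continuous_snd).prodMk
      ((continuous_tubePoint hνe).comp continuous_fst)))

include hzero in
lemma continuous_deformLoop :
    Continuous fun q : (X2space f F E νe × I) × I => q.1.1.deformLoop e hνe q.1.2 q.2 := by
  refine continuous_whiskerLoop (γ := fun p => p.1.loop.1) (ω := fun p => p.1.whisker hνe p.2)
    ?_ ?_ (continuous_time.comp continuous_fst) (continuous_subtype_val.comp (continuous_mark e))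
    (continuous_width e) (fun p => p.1.width_nonneg e p.2) (fun p => p.1.whisker_zero hνe p.2)
    (fun p => p.1.time_eq_zero_of_mark_sub_width e p.2)
    (fun p => p.1.whisker_eq_of_width_eq_zero hνe hzero p.2)
    (fun p => p.1.time_eq_one_of_mark_add_width e p.2)
  · have := continuous_loop (f := f) (F := F) (E := E) (νe := νe)
    fun_prop
  · have := continuous_tubeImage (f := f) hνe
    unfold whisker tubePath
    fun_prop

noncomputable def deformLoopMap : C(X2space f F E νe × I, LoopSp M₂) :=
  let G : C(X2space f F E νe × I, C(I, M₂)) := ContinuousMap.curry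
    ⟨fun q => q.1.1.deformLoop e hνe q.1.2 q.2, continuous_deformLoop hνe hzero⟩
  ⟨fun p => ⟨G p, (p.1.deformLoop_apply_zero e hνe p.2).trans
    (p.1.deformLoop_apply_one e hνe p.2).symm⟩,
    G.continuous.subtype_mk _⟩

lemma deformLoopMap_apply (p : X2space f F E νe × I) (u : I) :
    (deformLoopMap hνe hzero p).1 u = p.1.deformLoop e hνe p.2 u := rfl

lemma deformLoopMap_apply_mark_mem_range (p : X2space f F E νe × I) :
    ((deformLoopMap hνe hzero p).1 (p.1.mark e p.2), (p.1.tubeImage hνe p.2).2) ∈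
      range νe := by
  rw [deformLoopMap_apply, deformLoop_apply_mark hνe hzero]
  exact ⟨_, rfl⟩

noncomputable def deform : C(X2space f F E νe × I, X2space f F E νe) where
  toFun p := mk p.1.base (deformLoopMap hνe hzero p) (p.1.deformLoop_apply_zero e hνe p.2).symm
    (p.1.mark e p.2) (p.1.tubeImage hνe p.2).2 (deformLoopMap_apply_mark_mem_range hνe hzero p)
  continuous_toFun := continuous_mk (continuous_base.comp continuous_fst)
    (deformLoopMap hνe hzero).continuous (continuous_mark e)
    (continuous_snd.comp (continuous_tubeImage hνe)) _ _

lemma deform_one (z : X2space f F E νe) : deform hνe hzero (z, 1) = z := by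
  refine X2space.ext rfl ?_ (z.mark_one e)
    (show (z.tubeImage hνe 1).2 = z.disc by rw [tubeImage_one])
  exact Subtype.ext (ContinuousMap.ext (congrFun (z.deformLoop_one e hνe)))

lemma deform_loop_apply_time (p : X2space f F E νe × I) :
    (deform hνe hzero p).loop.1 (deform hνe hzero p).time = p.1.tubePath hνe p.2 :=
  p.1.deformLoop_apply_mark hνe hzero p.2

lemma deform_mem_Bbar12 {z : X2space f F E νe}
    (hz : (z : Lam12 f × I × Dball k ε) ∈ Bbar12 f e) (t : I) :
    (deform hνe hzero (z, t) : Lam12 f × I × Dball k ε) ∈ Bbar12 f e := by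
  refine ⟨congrArg Prod.snd
    (tubeImage_of_tubePoint_eq hνe hzero (tubePoint_of_mem_Bbar12 hνe hzero hz) t), ?_⟩
  rcases hz.2 with hγ | hs
  · exact Or.inl (Subtype.ext (ContinuousMap.ext
      (z.deformLoop_of_loop_eq_const hνe hzero t hγ hz.1)))
  · exact Or.inr (hs.imp (mark_of_disc_eq t hz.1).trans (mark_of_disc_eq t hz.1).trans)

@[simps]
noncomputable def retraction : C(X2space f F E νe, W112 f) where
  toFun z := (deform hνe hzero (z, 0)).toW112 (z.tubePoint hνe).proj
    ((z.tubePath_zero hνe hzero).symm.trans (deform_loop_apply_time hνe hzero (z, 0)).symm)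
  continuous_toFun := continuous_toW112 ((deform hνe hzero).continuous.comp
    (continuous_id.prodMk continuous_const))
    ((FiberBundle.continuous_proj F E).comp (continuous_tubePoint hνe)) _

lemma retraction_mem_B112 {z : X2space f F E νe}
    (hz : (z : Lam12 f × I × Dball k ε) ∈ Bbar12 f e) :
    retraction hνe hzero z ∈ B112 f := by
  rw [retraction_apply]
  exact toW112_mem_B112 (deform_mem_Bbar12 hνe hzero hz 0)
    (congrArg TotalSpace.proj (tubePoint_of_mem_Bbar12 hνe hzero hz)) _

lemma deform_zero (z : X2space f F E νe) :
    deform hνe hzero (z, 0) = ofW112 hzero (retraction hνe hzero z) := by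
  rw [retraction_apply, ofW112_toW112]
  exact congrArg Prod.snd (z.tubeImage_zero hνe hzero)

@[simps]
noncomputable def deformW : C(W112 f × I, W112 f) where
  toFun p := (deform hνe hzero (ofW112 hzero p.1, p.2)).toW112 p.1.1.2.1
    ((tubePath_of_tubePoint_eq hνe hzero (tubePoint_ofW112 hνe hzero p.1) p.2).symm.trans
      (deform_loop_apply_time hνe hzero (ofW112 hzero p.1, p.2)).symm)
  continuous_toFun := continuous_toW112 ((deform hνe hzero).continuous.comp
    (((ofW112 hzero).continuous.comp continuous_fst).prodMk continuous_snd)) (by fun_prop) _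

lemma deformW_zero (q : W112 f) :
    deformW hνe hzero (q, 0) = retraction hνe hzero (ofW112 hzero q) := by
  rw [deformW_apply, retraction_apply]
  exact toW112_congr _ (congrArg TotalSpace.proj (tubePoint_ofW112 hνe hzero q)).symm _ _

lemma deformW_one (q : W112 f) : deformW hνe hzero (q, 1) = q := by
  rw [deformW_apply]
  exact toW112_of_ofW112_eq hzero (deform_one hνe hzero _).symm _

lemma deformW_mem_B112 {q : W112 f} (hq : q ∈ B112 f) (t : I) :
    deformW hνe hzero (q, t) ∈ B112 f := by
  rw [deformW_apply]
  exact toW112_mem_B112 (deform_mem_Bbar12 hνe hzero (ofW112_mem_Bbar12 hzero hq) t) hq.1.symm _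

end Bundle

end Tube

end X2space

theorem f2e_pair_homotopy_equivalence_general
    (f : C(M₁, M₂)) {k : ℕ} {ε : ℝ}
    (e : C(M₁, Dball k ε))
    (F : Type) [NormedAddCommGroup F] [NormedSpace ℝ F]
    (E : M₁ → Type) [∀ m, TopologicalSpace (E m)]
    [∀ m, AddCommGroup (E m)] [∀ m, Module ℝ (E m)]
    [TopologicalSpace (Bundle.TotalSpace F E)]
    [FiberBundle F E] [VectorBundle ℝ F E]
    (νe : C(Bundle.TotalSpace F E, M₂ × Dball k ε))
    (hνe : Topology.IsEmbedding νe)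
    (hzero : ∀ m : M₁, νe (Bundle.TotalSpace.mk m 0) = (f m, e m)) :
    ∃ Φ : C(W112 f, X2space f F E νe),
      (∀ q : W112 f,
        ((Φ q : X2space f F E νe) : Lam12 f × unitInterval × Dball k ε) =
          (⟨(q.1.1, q.1.2.2.1), q.2.1⟩, q.1.2.2.2, e q.1.2.1)) ∧
      ∃ r : C(X2space f F E νe, W112 f),
        IsPairHomotopyInverse (B112 f)
          {x : X2space f F E νe | (x : Lam12 f × unitInterval × Dball k ε) ∈ Bbar12 f e}
          Φ r := by
  open X2space in
  exact ⟨ofW112 hzero, fun _ => rfl, retraction hνe hzero,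
    fun _ => ofW112_mem_Bbar12 hzero, fun _ => retraction_mem_B112 hνe hzero,
    ⟨deformW hνe hzero, deformW_zero hνe hzero, deformW_one hνe hzero,
      fun _ hq => deformW_mem_B112 hνe hzero hq⟩,
    ⟨deform hνe hzero, deform_zero hνe hzero, deform_one hνe hzero,
      fun _ hz => deform_mem_Bbar12 hνe hzero hz⟩⟩

theorem f2e_pair_homotopy_equivalence
    (f : C(M₁, M₂)) {k : ℕ} {ε : ℝ} (hε : 0 < ε) (hε' : ε < 1 / 4)
    (e : C(M₁, Dball k ε))
    (F : Type) [NormedAddCommGroup F] [NormedSpace ℝ F]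
    (E : M₁ → Type) [∀ m, TopologicalSpace (E m)]
    [∀ m, AddCommGroup (E m)] [∀ m, Module ℝ (E m)]
    [TopologicalSpace (Bundle.TotalSpace F E)]
    [FiberBundle F E] [VectorBundle ℝ F E]
    (νe : C(Bundle.TotalSpace F E, M₂ × Dball k ε))
    (hνe : Topology.IsEmbedding νe)
    (hzero : ∀ m : M₁, νe (Bundle.TotalSpace.mk m 0) = (f m, e m)) :
    ∃ Φ : C(W112 f, X2space f F E νe),
      (∀ q : W112 f,
        ((Φ q : X2space f F E νe) : Lam12 f × unitInterval × Dball k ε) =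
          (⟨(q.1.1, q.1.2.2.1), q.2.1⟩, q.1.2.2.2, e q.1.2.1)) ∧
      ∃ r : C(X2space f F E νe, W112 f),
        IsPairHomotopyInverse (B112 f)
          {x : X2space f F E νe | (x : Lam12 f × unitInterval × Dball k ε) ∈ Bbar12 f e}
          Φ r :=
  f2e_pair_homotopy_equivalence_general f e F E νe hνe hzero
end
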